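/- Under hypotheses (ρ), (A1), (A4), and the first part of (A5) (namely, for every t ∈ ℤ[1,T], lim_{|x₁|+|x₂|→∞} F(t,x₁,x₂)/(|x₁|^l + |x₂|^l) = +∞, with F continuous in (x₁,x₂)), the functionals I(u) = ∑_{t=1}^T [ρ₁(t)Φ₁(Δu₁(t)) + ρ₂(t)Φ₂(Δu₂(t)) + ρ₃(t)Φ₃(u₁(t)) + ρ₄(t)Φ₄(u₂(t))] and Ψ(u) = −∑_{t=1}^T F(t,u₁(t),u₂(t)) satisfy lim_{‖u‖→∞} Ψ(u)/I(u) = −∞; that is, for every M > 0 there exists R > 0 such that for all u ∈ E with ‖u‖ ≥ R we have I(u) > 0 and Ψ(u)/I(u) ≤ −M. -/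

import Mathlib

/-! `I` grows at most like `W(u) = ∑ₜ (|u₁(t)|^l + |u₂(t)|^l)`: by (A4) `Φᵢ(x) ≤ dᵢ|x|^l + mᵢ`,
and by periodicity `∑ₜ |Δu(t)|^l ≤ 2^l ∑ₜ |u(t)|^l`. Superlinearity of `F`, with continuity on
compact sets, gives `∑ₜ F(t, u₁(t), u₂(t)) ≥ M' W(u) − C` for every `M'`; taking `M'` above `M`
times the growth constant of `I` yields `Ψ(u) ≤ −M I(u)` once `W(u)` is large. And `W(u)` is large
when `‖u‖` is, since `‖v‖_{E_T}^θ ≤ (2^θ + 1) ∑ₜ |v(t)|^θ` and `|x|^θ ≤ |x|^l + 1`. Strict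
convexity with `Φᵢ(0) = 0` makes `Φᵢ` positive off `0`, so `I(u) > 0` as soon as `W(u) > 0`. -/

noncomputable section

abbrev Rn (N : ℕ) := EuclideanSpace ℝ (Fin N)

def IsPeriodic (N : ℕ) (T : ℕ) (u : ℤ → Rn N) : Prop := ∀ t : ℤ, u (t + T) = u t

def fdiff (N : ℕ) (u : ℤ → Rn N) (t : ℤ) : Rn N := u (t + 1) - u t

def normET (N T : ℕ) (θ : ℝ) (u : ℤ → Rn N) : ℝ :=
  (∑ t ∈ Finset.Icc (1 : ℤ) (T : ℤ), ‖fdiff N u t‖ ^ θ +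
    ∑ t ∈ Finset.Icc (1 : ℤ) (T : ℤ), ‖u t‖ ^ θ) ^ (1 / θ)

def normE (N T : ℕ) (θ : ℝ) (u : (ℤ → Rn N) × (ℤ → Rn N)) : ℝ :=
  normET N T θ u.1 + normET N T θ u.2

def Ifun (N T : ℕ) (ρ : Fin 4 → ℤ → ℝ) (Φv : Fin 4 → Rn N → ℝ)
    (u : (ℤ → Rn N) × (ℤ → Rn N)) : ℝ :=
  ∑ t ∈ Finset.Icc (1 : ℤ) (T : ℤ),
    (ρ 0 t * Φv 0 (fdiff N u.1 t) + ρ 1 t * Φv 1 (fdiff N u.2 t)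
      + ρ 2 t * Φv 2 (u.1 t) + ρ 3 t * Φv 3 (u.2 t))

def PsiFun (N T : ℕ) (F : ℤ → Rn N → Rn N → ℝ) (u : (ℤ → Rn N) × (ℤ → Rn N)) : ℝ :=
  -∑ t ∈ Finset.Icc (1 : ℤ) (T : ℤ), F t (u.1 t) (u.2 t)

open Finset

theorem Function.Periodic.sum_Icc_comp_add_one {M : Type*} [AddCancelCommMonoid M] {f : ℤ → M}
    {T : ℕ} (hf : Function.Periodic f T) :
    ∑ t ∈ Icc 1 (T : ℤ), f (t + 1) = ∑ t ∈ Icc 1 (T : ℤ), f t := by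
  have hshift : ∑ t ∈ Icc 1 (T : ℤ), f (t + 1) = ∑ t ∈ Icc 2 ((T : ℤ) + 1), f t := by
    rw [show Icc 2 ((T : ℤ) + 1) = (Icc 1 (T : ℤ)).map (addRightEmbedding 1) by
      rw [map_add_right_Icc]; norm_num, sum_map]
    rfl
  have hsplit : Icc 1 ((T : ℤ) + 1) = insert 1 (Icc 2 ((T : ℤ) + 1)) ∧
      Icc 1 ((T : ℤ) + 1) = insert ((T : ℤ) + 1) (Icc 1 (T : ℤ)) := by
    constructor <;> ext <;> simp only [mem_Icc, mem_insert] <;> omega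
  have hsum := congrArg (∑ t ∈ ·, f t) (hsplit.1.symm.trans hsplit.2)
  rw [sum_insert (by simp), sum_insert (by simp), add_comm (T : ℤ), hf 1] at hsum
  rw [hshift, add_comm (T : ℤ)]
  exact add_left_cancel hsum

theorem Real.rpow_add_le_mul_rpow_add_rpow {a b p : ℝ} (ha : 0 ≤ a) (hb : 0 ≤ b) (hp : 1 ≤ p) :
    (a + b) ^ p ≤ 2 ^ (p - 1) * (a ^ p + b ^ p) := by
  lift a to NNReal using ha
  lift b to NNReal using hb
  exact_mod_cast NNReal.rpow_add_le_mul_rpow_add_rpow a b hp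

theorem Real.rpow_le_rpow_add_one {x p q : ℝ} (hx : 0 ≤ x) (hp : 0 ≤ p) (hpq : p ≤ q) :
    x ^ p ≤ x ^ q + 1 := by
  rcases le_or_gt 1 x with h | h
  · linarith [Real.rpow_le_rpow_of_exponent_le h hpq]
  · linarith [Real.rpow_le_one hx h.le hp, Real.rpow_nonneg hx q]

theorem StrictConvexOn.pos_of_ne_zero {E : Type*} [AddCommGroup E] [Module ℝ E] {f : E → ℝ}
    (hf : StrictConvexOn ℝ Set.univ f) (h₀ : f 0 = 0) (hnonneg : ∀ x, 0 ≤ f x) {x : E}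
    (hx : x ≠ 0) : 0 < f x := by
  have hmid := hf.2 (Set.mem_univ x) (Set.mem_univ 0) hx (by norm_num : (0 : ℝ) < 1 / 2)
    (by norm_num : (0 : ℝ) < 1 / 2) (by norm_num)
  rw [smul_zero, add_zero, h₀, smul_zero, add_zero, smul_eq_mul] at hmid
  linarith [hnonneg ((1 / 2 : ℝ) • x)]

theorem Continuous.exists_sub_le_of_eventually_le {α : Type*} [TopologicalSpace α]
    {f g : α → ℝ} (hf : Continuous f) (hg : Continuous g)
    (h : ∀ᶠ x in Filter.cocompact α, f x ≤ g x) : ∃ C, ∀ x, f x - C ≤ g x := by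
  rcases isEmpty_or_nonempty α with hα | ⟨⟨x₀⟩⟩
  · exact ⟨0, fun x => isEmptyElim x⟩
  -- `max (f - g) 0` vanishes off a compact set, hence attains its maximum
  have hmax : Continuous fun x => max (f x - g x) 0 := by fun_prop
  obtain ⟨x, hx⟩ := hmax.exists_forall_ge' x₀ <| h.mono fun y hy =>
    max_le ((sub_nonpos.2 hy).trans (le_max_right _ _)) (le_max_right _ _)
  exact ⟨max (f x - g x) 0, fun y => by linarith [hx y, le_max_left (f y - g y) 0]⟩

theorem exists_sub_le_of_superlinear {E : Type*} [NormedAddCommGroup E] [ProperSpace E]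
    {G : E → E → ℝ} (hG : Continuous fun p : E × E => G p.1 p.2) {l : ℝ} (hl : 0 ≤ l) (M R : ℝ)
    (hR : ∀ x₁ x₂ : E, R ≤ ‖x₁‖ + ‖x₂‖ → M ≤ G x₁ x₂ / (‖x₁‖ ^ l + ‖x₂‖ ^ l)) :
    ∃ C, ∀ x₁ x₂ : E, M * (‖x₁‖ ^ l + ‖x₂‖ ^ l) - C ≤ G x₁ x₂ := by
  have hcont : Continuous fun p : E × E => M * (‖p.1‖ ^ l + ‖p.2‖ ^ l) := by
    have := Real.continuous_rpow_const hl
    fun_prop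
  obtain ⟨C, hC⟩ := hcont.exists_sub_le_of_eventually_le hG <|
    (tendsto_norm_cocompact_atTop.eventually_ge_atTop (max R 1)).mono fun p hp => by
      have hsum : max R 1 ≤ ‖p.1‖ + ‖p.2‖ :=
        hp.trans ((Prod.norm_def p).trans_le (max_le_add_of_nonneg (norm_nonneg _) (norm_nonneg _)))
      have hpos : 0 < ‖p.1‖ ^ l + ‖p.2‖ ^ l := by
        rcases (norm_nonneg p.1).eq_or_lt with h₁ | h₁
        · have : 0 < ‖p.2‖ := by linarith [le_max_right R 1]
          positivity
        · positivity
      exact (le_div_iff₀ hpos).1 (hR _ _ ((le_max_left R 1).trans hsum))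
  exact ⟨C, fun x₁ x₂ => hC (x₁, x₂)⟩

def sumRpowNorm (N T : ℕ) (l : ℝ) (u : (ℤ → Rn N) × (ℤ → Rn N)) : ℝ :=
  ∑ t ∈ Icc (1 : ℤ) T, (‖u.1 t‖ ^ l + ‖u.2 t‖ ^ l)

section

variable {N T : ℕ}

theorem IsPeriodic.sum_norm_fdiff_rpow_le {u : ℤ → Rn N} (hu : IsPeriodic N T u) {p : ℝ}
    (hp : 1 ≤ p) :
    ∑ t ∈ Icc 1 (T : ℤ), ‖fdiff N u t‖ ^ p ≤ 2 ^ p * ∑ t ∈ Icc 1 (T : ℤ), ‖u t‖ ^ p := by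
  have hshift : ∑ t ∈ Icc 1 (T : ℤ), ‖u (t + 1)‖ ^ p = ∑ t ∈ Icc 1 (T : ℤ), ‖u t‖ ^ p :=
    Function.Periodic.sum_Icc_comp_add_one
      (Function.Periodic.comp (c := (T : ℤ)) hu fun x => ‖x‖ ^ p)
  calc ∑ t ∈ Icc 1 (T : ℤ), ‖fdiff N u t‖ ^ p
      ≤ ∑ t ∈ Icc 1 (T : ℤ), 2 ^ (p - 1) * (‖u (t + 1)‖ ^ p + ‖u t‖ ^ p) :=
        sum_le_sum fun t _ => (Real.rpow_le_rpow (norm_nonneg _) (norm_sub_le _ _)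
          (by linarith)).trans (Real.rpow_add_le_mul_rpow_add_rpow (norm_nonneg _)
            (norm_nonneg _) hp)
    _ = 2 ^ p * ∑ t ∈ Icc 1 (T : ℤ), ‖u t‖ ^ p := by
        rw [← mul_sum, sum_add_distrib, hshift, Real.rpow_sub_one two_ne_zero]
        ring

theorem IsPeriodic.normET_le {u : ℤ → Rn N} (hu : IsPeriodic N T u) {θ : ℝ} (hθ : 1 ≤ θ) :
    normET N T θ u ≤ ((2 ^ θ + 1) * ∑ t ∈ Icc 1 (T : ℤ), ‖u t‖ ^ θ) ^ (1 / θ) := by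
  refine Real.rpow_le_rpow (by positivity) ?_ (by positivity)
  linarith [hu.sum_norm_fdiff_rpow_le hθ]

theorem sum_rpow_norm_le_sum_rpow_norm_add (u : ℤ → Rn N) {θ l : ℝ} (hθ : 0 ≤ θ) (hθl : θ ≤ l) :
    ∑ t ∈ Icc 1 (T : ℤ), ‖u t‖ ^ θ ≤ ∑ t ∈ Icc 1 (T : ℤ), ‖u t‖ ^ l + T := by
  calc ∑ t ∈ Icc 1 (T : ℤ), ‖u t‖ ^ θ ≤ ∑ t ∈ Icc 1 (T : ℤ), (‖u t‖ ^ l + 1) :=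
        sum_le_sum fun t _ => Real.rpow_le_rpow_add_one (norm_nonneg _) hθ hθl
    _ = ∑ t ∈ Icc 1 (T : ℤ), ‖u t‖ ^ l + T := by simp [sum_add_distrib]

theorem exists_le_sumRpowNorm_of_le_normE {θ l : ℝ} (hθ : 1 ≤ θ) (hθl : θ ≤ l) (X : ℝ) :
    ∃ R > 0, ∀ u : (ℤ → Rn N) × (ℤ → Rn N), IsPeriodic N T u.1 → IsPeriodic N T u.2 →
      R ≤ normE N T θ u → X ≤ sumRpowNorm N T l u := by
  set Y := max (X + 2 * T) 0
  set r := ((2 ^ θ + 1) * Y) ^ (1 / θ)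
  have hr : 0 ≤ r := by positivity
  refine ⟨2 * r + 1, by linarith, fun u hu₁ hu₂ hR => ?_⟩
  by_contra! hX
  have hB : ∑ t ∈ Icc 1 (T : ℤ), ‖u.1 t‖ ^ θ + ∑ t ∈ Icc 1 (T : ℤ), ‖u.2 t‖ ^ θ ≤ Y := by
    have := sum_rpow_norm_le_sum_rpow_norm_add (T := T) u.1 (by linarith) hθl
    have := sum_rpow_norm_le_sum_rpow_norm_add (T := T) u.2 (by linarith) hθl
    rw [sumRpowNorm, sum_add_distrib] at hX
    linarith [le_max_left (X + 2 * T) 0]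
  have hnormET : ∀ v : ℤ → Rn N, IsPeriodic N T v →
      ∑ t ∈ Icc 1 (T : ℤ), ‖v t‖ ^ θ ≤ Y → normET N T θ v ≤ r := fun v hv hvY =>
    (hv.normET_le hθ).trans <| Real.rpow_le_rpow (by positivity)
      (mul_le_mul_of_nonneg_left hvY (by positivity)) (by positivity)
  have hB₁ : 0 ≤ ∑ t ∈ Icc 1 (T : ℤ), ‖u.1 t‖ ^ θ := by positivity
  have hB₂ : 0 ≤ ∑ t ∈ Icc 1 (T : ℤ), ‖u.2 t‖ ^ θ := by positivity
  have := hnormET u.1 hu₁ (by linarith)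
  have := hnormET u.2 hu₂ (by linarith)
  rw [normE] at hR
  linarith

theorem exists_Ifun_le {ρ : Fin 4 → ℤ → ℝ} {Φv : Fin 4 → Rn N → ℝ} {l : ℝ}
    {d m : Fin 4 → ℝ} (hl : 1 ≤ l) (hρ : ∀ i, ∀ t ∈ Icc (1 : ℤ) T, 0 ≤ ρ i t)
    (hΦ : ∀ i, ∀ x : Rn N, Φv i x ≤ d i * ‖x‖ ^ l + m i) :
    ∃ c₁ c₂ : ℝ, ∀ u : (ℤ → Rn N) × (ℤ → Rn N), IsPeriodic N T u.1 → IsPeriodic N T u.2 →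
      Ifun N T ρ Φv u ≤ c₁ * sumRpowNorm N T l u + c₂ := by
  set S := Icc (1 : ℤ) T
  set Q := ∑ i, ∑ t ∈ S, ρ i t * |d i|
  have hQ : 0 ≤ Q :=
    sum_nonneg fun i _ => sum_nonneg fun t ht => mul_nonneg (hρ i t ht) (abs_nonneg _)
  have hterm : ∀ i, ∀ t ∈ S, ∀ x : Rn N, ρ i t * Φv i x ≤ Q * ‖x‖ ^ l + ρ i t * m i := by
    intro i t ht x
    have hρQ : ρ i t * |d i| ≤ Q :=
      (single_le_sum (fun s hs => mul_nonneg (hρ i s hs) (abs_nonneg _)) ht).trans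
        (single_le_sum (f := fun j => ∑ s ∈ S, ρ j s * |d j|)
          (fun j _ => sum_nonneg fun s hs => mul_nonneg (hρ j s hs) (abs_nonneg _)) (mem_univ i))
    calc ρ i t * Φv i x ≤ ρ i t * (d i * ‖x‖ ^ l + m i) :=
          mul_le_mul_of_nonneg_left (hΦ i x) (hρ i t ht)
      _ ≤ ρ i t * |d i| * ‖x‖ ^ l + ρ i t * m i := by
        rw [mul_add, ← mul_assoc]
        have := hρ i t ht
        gcongr
        exact le_abs_self _
      _ ≤ Q * ‖x‖ ^ l + ρ i t * m i := by gcongr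
  refine ⟨Q * (2 ^ l + 1), ∑ t ∈ S, ∑ i, ρ i t * m i, fun u hu₁ hu₂ => ?_⟩
  have hΔ₁ := hu₁.sum_norm_fdiff_rpow_le hl
  have hΔ₂ := hu₂.sum_norm_fdiff_rpow_le hl
  calc Ifun N T ρ Φv u
      ≤ ∑ t ∈ S, (Q * (‖fdiff N u.1 t‖ ^ l + ‖fdiff N u.2 t‖ ^ l + (‖u.1 t‖ ^ l + ‖u.2 t‖ ^ l))
          + ∑ i, ρ i t * m i) := by
        refine sum_le_sum fun t ht => ?_
        rw [Fin.sum_univ_four]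
        linarith [hterm 0 t ht (fdiff N u.1 t), hterm 1 t ht (fdiff N u.2 t),
          hterm 2 t ht (u.1 t), hterm 3 t ht (u.2 t)]
    _ = Q * (∑ t ∈ S, ‖fdiff N u.1 t‖ ^ l + ∑ t ∈ S, ‖fdiff N u.2 t‖ ^ l
          + sumRpowNorm N T l u) + ∑ t ∈ S, ∑ i, ρ i t * m i := by
        simp only [sumRpowNorm, S, ← mul_sum, sum_add_distrib]
    _ ≤ Q * (2 ^ l + 1) * sumRpowNorm N T l u + ∑ t ∈ S, ∑ i, ρ i t * m i := by
        have hΔ : ∑ t ∈ S, ‖fdiff N u.1 t‖ ^ l + ∑ t ∈ S, ‖fdiff N u.2 t‖ ^ l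
            ≤ 2 ^ l * sumRpowNorm N T l u := by
          rw [sumRpowNorm, sum_add_distrib]
          linarith
        linarith [mul_le_mul_of_nonneg_left hΔ hQ]

theorem exists_sub_le_sum_of_superlinear {F : ℤ → Rn N → Rn N → ℝ} {l : ℝ}
    (hl : 0 ≤ l) (hFcont : ∀ t : ℤ, Continuous (fun p : Rn N × Rn N => F t p.1 p.2))
    (hFcoer : ∀ t ∈ Icc (1 : ℤ) T, ∀ M : ℝ, ∃ R : ℝ,
      ∀ x₁ x₂ : Rn N, R ≤ ‖x₁‖ + ‖x₂‖ → M ≤ F t x₁ x₂ / (‖x₁‖ ^ l + ‖x₂‖ ^ l)) (M : ℝ) :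
    ∃ C, ∀ u : (ℤ → Rn N) × (ℤ → Rn N),
      M * sumRpowNorm N T l u - C ≤ ∑ t ∈ Icc (1 : ℤ) T, F t (u.1 t) (u.2 t) := by
  have hC : ∀ t, ∃ C, t ∈ Icc (1 : ℤ) T →
      ∀ x₁ x₂ : Rn N, M * (‖x₁‖ ^ l + ‖x₂‖ ^ l) - C ≤ F t x₁ x₂ := by
    intro t
    by_cases ht : t ∈ Icc (1 : ℤ) T
    · obtain ⟨R, hR⟩ := hFcoer t ht M
      obtain ⟨C, hC⟩ := exists_sub_le_of_superlinear (hFcont t) hl M R hR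
      exact ⟨C, fun _ => hC⟩
    · exact ⟨0, fun h => absurd h ht⟩
  choose C hC using hC
  refine ⟨∑ t ∈ Icc (1 : ℤ) T, C t, fun u => ?_⟩
  rw [sumRpowNorm, mul_sum, ← sum_sub_distrib]
  exact sum_le_sum fun t ht => hC t ht _ _

theorem exists_ne_zero_of_sumRpowNorm_ne_zero {l : ℝ} (hl : l ≠ 0)
    {u : (ℤ → Rn N) × (ℤ → Rn N)} (h : sumRpowNorm N T l u ≠ 0) :
    ∃ t ∈ Icc (1 : ℤ) T, u.1 t ≠ 0 ∨ u.2 t ≠ 0 := by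
  obtain ⟨t, ht, hne⟩ := exists_ne_zero_of_sum_ne_zero h
  refine ⟨t, ht, ?_⟩
  by_contra! h₀
  simp [h₀.1, h₀.2, Real.zero_rpow hl] at hne

theorem Ifun_pos {ρ : Fin 4 → ℤ → ℝ} {Φv : Fin 4 → Rn N → ℝ}
    (hρ : ∀ i, ∀ t ∈ Icc (1 : ℤ) T, 0 < ρ i t) (hΦnonneg : ∀ i, ∀ x : Rn N, 0 ≤ Φv i x)
    (hΦconv : ∀ i, StrictConvexOn ℝ Set.univ (Φv i)) (hΦzero : ∀ i, Φv i 0 = 0)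
    {u : (ℤ → Rn N) × (ℤ → Rn N)} (hu : ∃ t ∈ Icc (1 : ℤ) T, u.1 t ≠ 0 ∨ u.2 t ≠ 0) :
    0 < Ifun N T ρ Φv u := by
  obtain ⟨t₀, ht₀, hne⟩ := hu
  have hterm : ∀ i, ∀ t ∈ Icc (1 : ℤ) T, ∀ x, 0 ≤ ρ i t * Φv i x :=
    fun i t ht x => mul_nonneg (hρ i t ht).le (hΦnonneg i x)
  refine sum_pos' (fun t ht => ?_) ⟨t₀, ht₀, ?_⟩
  · linarith [hterm 0 t ht (fdiff N u.1 t), hterm 1 t ht (fdiff N u.2 t),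
      hterm 2 t ht (u.1 t), hterm 3 t ht (u.2 t)]
  · have := hterm 0 t₀ ht₀ (fdiff N u.1 t₀)
    have := hterm 1 t₀ ht₀ (fdiff N u.2 t₀)
    rcases hne with h | h
    · have := mul_pos (hρ 2 t₀ ht₀) ((hΦconv 2).pos_of_ne_zero (hΦzero 2) (hΦnonneg 2) h)
      linarith [hterm 3 t₀ ht₀ (u.2 t₀)]
    · have := mul_pos (hρ 3 t₀ ht₀) ((hΦconv 3).pos_of_ne_zero (hΦzero 3) (hΦnonneg 3) h)
      linarith [hterm 2 t₀ ht₀ (u.1 t₀)]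

end

theorem psi_div_I_tendsto_neg_infty_general (T N : ℕ)
    (ρ : Fin 4 → ℤ → ℝ) (Φv : Fin 4 → Rn N → ℝ)
    (F : ℤ → Rn N → Rn N → ℝ)
    (θ l : ℝ) (d m : Fin 4 → ℝ)
    (hθ : 1 < θ) (hl : θ ≤ l)
    -- hypothesis (ρ)
    (hρpos : ∀ i, ∀ t ∈ Finset.Icc (1 : ℤ) (T : ℤ), 0 < ρ i t)
    -- hypothesis (A1)
    (hΦnonneg : ∀ i, ∀ x : Rn N, 0 ≤ Φv i x)
    (hΦconv : ∀ i, StrictConvexOn ℝ Set.univ (Φv i))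
    (hΦzero : ∀ i, Φv i 0 = 0)
    -- hypothesis (A4)
    (hA4bnd : ∀ i, ∀ x : Rn N, Φv i x ≤ d i * ‖x‖ ^ l + m i)
    -- `F`: `T`-periodic in `t`, continuous, and superlinear of order `l` (first part of (A5))
    (hFcont : ∀ t : ℤ, Continuous (fun p : Rn N × Rn N => F t p.1 p.2))
    (hFcoer : ∀ t ∈ Finset.Icc (1 : ℤ) (T : ℤ), ∀ M : ℝ, ∃ R : ℝ,
      ∀ x₁ x₂ : Rn N, R ≤ ‖x₁‖ + ‖x₂‖ →
        M ≤ F t x₁ x₂ / (‖x₁‖ ^ l + ‖x₂‖ ^ l)) :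
    ∀ M : ℝ, 0 < M → ∃ R : ℝ, 0 < R ∧
      ∀ u : (ℤ → Rn N) × (ℤ → Rn N), IsPeriodic N T u.1 → IsPeriodic N T u.2 →
        R ≤ normE N T θ u →
          0 < Ifun N T ρ Φv u ∧ PsiFun N T F u / Ifun N T ρ Φv u ≤ -M := by
  intro M hM
  have hl₀ : 0 < l := by linarith
  obtain ⟨c₁, c₂, hI⟩ := exists_Ifun_le (by linarith) (fun i t ht => (hρpos i t ht).le) hA4bnd
  obtain ⟨C, hF⟩ := exists_sub_le_sum_of_superlinear hl₀.le hFcont hFcoer (M * c₁ + 1)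
  obtain ⟨R, hR, hW⟩ := exists_le_sumRpowNorm_of_le_normE hθ.le hl (max (C + M * c₂) 1)
  refine ⟨R, hR, fun u hu₁ hu₂ hRu => ?_⟩
  have hWu := hW u hu₁ hu₂ hRu
  have hIpos : 0 < Ifun N T ρ Φv u := Ifun_pos hρpos hΦnonneg hΦconv hΦzero <|
    exists_ne_zero_of_sumRpowNorm_ne_zero hl₀.ne' (by linarith [le_max_right (C + M * c₂) 1])
  refine ⟨hIpos, ?_⟩
  rw [div_le_iff₀ hIpos, PsiFun, neg_mul, neg_le_neg_iff]
  calc M * Ifun N T ρ Φv u ≤ M * (c₁ * sumRpowNorm N T l u + c₂) :=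
        mul_le_mul_of_nonneg_left (hI u hu₁ hu₂) hM.le
    _ ≤ (M * c₁ + 1) * sumRpowNorm N T l u - C := by linarith [le_max_left (C + M * c₂) 1]
    _ ≤ _ := hF u

theorem psi_div_I_tendsto_neg_infty (T N : ℕ) (hT : 1 < T)
    (ρ : Fin 4 → ℤ → ℝ) (φv : Fin 4 → Rn N → Rn N) (Φv : Fin 4 → Rn N → ℝ)
    (F : ℤ → Rn N → Rn N → ℝ)
    (θ l : ℝ) (d m : Fin 4 → ℝ)
    (hθ : 1 < θ) (hl : θ ≤ l) (hd : ∀ i, 0 < d i) (hm : ∀ i, 0 < m i)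
    -- hypothesis (ρ)
    (hρper : ∀ i, ∀ t : ℤ, ρ i (t + T) = ρ i t)
    (hρpos : ∀ i, ∀ t ∈ Finset.Icc (1 : ℤ) (T : ℤ), 0 < ρ i t)
    -- hypothesis (A1)
    (hφhomeo : ∀ i, IsHomeomorph (φv i))
    (hφzero : ∀ i, φv i 0 = 0)
    (hφgrad : ∀ i, ∀ x : Rn N, φv i x = gradient (Φv i) x)
    (hΦC1 : ∀ i, ContDiff ℝ 1 (Φv i))
    (hΦnonneg : ∀ i, ∀ x : Rn N, 0 ≤ Φv i x)
    (hΦconv : ∀ i, StrictConvexOn ℝ Set.univ (Φv i))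
    (hΦzero : ∀ i, Φv i 0 = 0)
    -- hypothesis (A4)
    (hA4coer : ∀ i, ∀ M : ℝ, ∃ R : ℝ, ∀ x : Rn N, R ≤ ‖x‖ → M ≤ Φv i x)
    (hA4bnd : ∀ i, ∀ x : Rn N, Φv i x ≤ d i * ‖x‖ ^ l + m i)
    -- `F`: `T`-periodic in `t`, continuous, and superlinear of order `l` (first part of (A5))
    (hFper : ∀ (t : ℤ) (x₁ x₂ : Rn N), F (t + T) x₁ x₂ = F t x₁ x₂)
    (hFcont : ∀ t : ℤ, Continuous (fun p : Rn N × Rn N => F t p.1 p.2))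
    (hFcoer : ∀ t ∈ Finset.Icc (1 : ℤ) (T : ℤ), ∀ M : ℝ, ∃ R : ℝ,
      ∀ x₁ x₂ : Rn N, R ≤ ‖x₁‖ + ‖x₂‖ →
        M ≤ F t x₁ x₂ / (‖x₁‖ ^ l + ‖x₂‖ ^ l)) :
    ∀ M : ℝ, 0 < M → ∃ R : ℝ, 0 < R ∧
      ∀ u : (ℤ → Rn N) × (ℤ → Rn N), IsPeriodic N T u.1 → IsPeriodic N T u.2 →
        R ≤ normE N T θ u →
          0 < Ifun N T ρ Φv u ∧ PsiFun N T F u / Ifun N T ρ Φv u ≤ -M :=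
  psi_div_I_tendsto_neg_infty_general T N ρ Φv F θ l d m hθ hl hρpos hΦnonneg hΦconv hΦzero hA4bnd
    hFcont hFcoer
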